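/- arXiv:2603.16678 — 6 statements merged into one kernel-verified Lean document; each statement's English description precedes it below -/
import Mathlib

section
/- Let finite real sequences $(a_1,\dots,a_k)$ and $(b_1,\dots,b_k)$ satisfy: for every $j \le k$, the sum of the $j$ largest among $a_1,\dots,a_k$ is at least the sum of the $j$ largest among $b_1,\dots,b_k$ (one-sided majorization $a \succeq b$). Extend both sequences by $a_{n+1} = \varepsilon_n \bar a_n + (1-\varepsilon_n)\bar a^{(n)}_{m_n}$ and $b_{n+1} \le \varepsilon_n \bar b_n + (1-\varepsilon_n)\bar b^{(n)}_{m_n}$ for all $n \ge k$, where $\varepsilon_n \in [0,1]$ and $1 \le m_n \le n$. Then for every $m \ge k$ the extended sequence $(a_1,\dots,a_m)$ one-sidedly majorizes $(b_1,\dots,b_m)$, and $a_m \ge b_m$ for all $m \ge k+1$. -/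
/-!
Adding the term `a (n + 1)` changes the top sums only by
`topSum a (n + 1) (j + 1) = max (topSum a n (j + 1)) (topSum a n j + a (n + 1))`,
so one-sided majorization propagates from `n` to `n + 1` as soon as `b (n + 1) ≤ a (n + 1)`.
That inequality in turn follows from majorization at `n`, since both the mean
`topSum · n n / n` and the top mean `topSum · n (m n) / m n` are monotone in the top sums.
-/

open Finset

/-- Average of the first `n` terms `a 1, …, a n`. -/
noncomputable def avgSeq (a : ℕ → ℝ) (n : ℕ) : ℝ := (∑ j ∈ Finset.Icc 1 n, a j) / n

/-- Sum of the `j` largest among `a 1, …, a n` (as a sup over `j`-element subsets). -/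
noncomputable def topSum (a : ℕ → ℝ) (n j : ℕ) : ℝ :=
  sSup {x | ∃ S : Finset ℕ, S ⊆ Finset.Icc 1 n ∧ S.card = j ∧ x = ∑ i ∈ S, a i}

/-- Sum of the `j` smallest among `a 1, …, a n`. -/
noncomputable def botSum (a : ℕ → ℝ) (n j : ℕ) : ℝ :=
  sInf {x | ∃ S : Finset ℕ, S ⊆ Finset.Icc 1 n ∧ S.card = j ∧ x = ∑ i ∈ S, a i}

/-- Average of the `j` largest among `a 1, …, a n`. -/
noncomputable def topAvg (a : ℕ → ℝ) (n j : ℕ) : ℝ := topSum a n j / j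

/-- Average of the `j` smallest among `a 1, …, a n`. -/
noncomputable def botAvg (a : ℕ → ℝ) (n j : ℕ) : ℝ := botSum a n j / j

/-- The `j`-th largest among `a 1, …, a n` (decreasing rearrangement). -/
noncomputable def ordStat (a : ℕ → ℝ) (n j : ℕ) : ℝ := topSum a n j - topSum a n (j - 1)

lemma topSum_eq_sSup_image (a : ℕ → ℝ) (n j : ℕ) :
    topSum a n j = sSup ↑(((Icc 1 n).powersetCard j).image fun S => ∑ i ∈ S, a i) := by
  rw [topSum]
  congr 1
  ext x
  simp [mem_powersetCard, and_assoc, eq_comm]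

lemma le_topSum (a : ℕ → ℝ) {n j : ℕ} {S : Finset ℕ} (hS : S ⊆ Icc 1 n) (hc : #S = j) :
    ∑ i ∈ S, a i ≤ topSum a n j := by
  rw [topSum_eq_sSup_image]
  exact le_csSup (finite_toSet _).bddAbove
    (mem_coe.2 (mem_image_of_mem _ (mem_powersetCard.2 ⟨hS, hc⟩)))

lemma powersetCard_Icc_nonempty {n j : ℕ} (hj : j ≤ n) : ((Icc 1 n).powersetCard j).Nonempty :=
  powersetCard_nonempty.2 (by simpa using hj)

lemma topSum_le (a : ℕ → ℝ) {n j : ℕ} (hj : j ≤ n) {c : ℝ}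
    (h : ∀ S ⊆ Icc 1 n, #S = j → ∑ i ∈ S, a i ≤ c) : topSum a n j ≤ c := by
  rw [topSum_eq_sSup_image]
  refine csSup_le (((powersetCard_Icc_nonempty hj).image _).to_set) ?_
  intro x hx
  obtain ⟨S, hS, rfl⟩ := mem_image.1 (mem_coe.1 hx)
  obtain ⟨hSsub, hSc⟩ := mem_powersetCard.1 hS
  exact h S hSsub hSc

lemma exists_sum_eq_topSum (a : ℕ → ℝ) {n j : ℕ} (hj : j ≤ n) :
    ∃ S ⊆ Icc 1 n, #S = j ∧ ∑ i ∈ S, a i = topSum a n j := by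
  rw [topSum_eq_sSup_image]
  obtain ⟨S, hS, hSeq⟩ := mem_image.1 (((powersetCard_Icc_nonempty hj).image fun S => ∑ i ∈ S, a i).csSup_mem)
  exact ⟨S, (mem_powersetCard.1 hS).1, (mem_powersetCard.1 hS).2, hSeq⟩

lemma topSum_zero (a : ℕ → ℝ) (n : ℕ) : topSum a n 0 = 0 :=
  le_antisymm (topSum_le a n.zero_le fun _ _ hc => by simp [card_eq_zero.1 hc])
    (by simpa using le_topSum a (S := ∅) (empty_subset (Icc 1 n)) card_empty)

lemma topSum_self (a : ℕ → ℝ) (n : ℕ) : topSum a n n = ∑ i ∈ Icc 1 n, a i := by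
  refine le_antisymm (topSum_le a le_rfl fun S hS hc => ?_) (le_topSum a subset_rfl (by simp))
  rw [eq_of_subset_of_card_le hS (by simp [hc])]

lemma avgSeq_eq_topAvg (a : ℕ → ℝ) (n : ℕ) : avgSeq a n = topAvg a n n := by
  rw [avgSeq, topAvg, topSum_self]

lemma subset_Icc_of_notMem {n : ℕ} {S : Finset ℕ} (hS : S ⊆ Icc 1 (n + 1)) (hn : n + 1 ∉ S) :
    S ⊆ Icc 1 n := by
  intro i hi
  have hi' := mem_Icc.1 (hS hi)
  have : i ≠ n + 1 := fun h => hn (h ▸ hi)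
  exact mem_Icc.2 ⟨hi'.1, by omega⟩

lemma topSum_le_topSum_succ (a : ℕ → ℝ) {n j : ℕ} (hj : j ≤ n) :
    topSum a n j ≤ topSum a (n + 1) j :=
  topSum_le a hj fun _ hS hc => le_topSum a (hS.trans (Icc_subset_Icc_right n.le_succ)) hc

lemma topSum_add_le_topSum_succ (a : ℕ → ℝ) {n j : ℕ} (hj : j ≤ n) :
    topSum a n j + a (n + 1) ≤ topSum a (n + 1) (j + 1) := by
  obtain ⟨S, hS, hSc, hSeq⟩ := exists_sum_eq_topSum a hj
  have hnotMem : n + 1 ∉ S := fun h => by have := (mem_Icc.1 (hS h)).2; omega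
  have hsub : insert (n + 1) S ⊆ Icc 1 (n + 1) :=
    insert_subset (by simp) (hS.trans (Icc_subset_Icc_right n.le_succ))
  have := le_topSum a hsub (by rw [card_insert_of_notMem hnotMem, hSc])
  rwa [sum_insert hnotMem, hSeq, add_comm] at this

def WeakMajorizes (a b : ℕ → ℝ) (n : ℕ) : Prop :=
  ∀ j ≤ n, topSum b n j ≤ topSum a n j

lemma weakMajorizes_iff {a b : ℕ → ℝ} {n : ℕ} :
    WeakMajorizes a b n ↔ ∀ j, 1 ≤ j → j ≤ n → topSum b n j ≤ topSum a n j := by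
  refine ⟨fun h j _ hj => h j hj, fun h j hj => ?_⟩
  rcases j.eq_zero_or_pos with rfl | hj0
  · simp [topSum_zero]
  · exact h j hj0 hj

namespace WeakMajorizes

variable {a b : ℕ → ℝ} {n : ℕ}

lemma topAvg_le (h : WeakMajorizes a b n) {j : ℕ} (hj : j ≤ n) : topAvg b n j ≤ topAvg a n j :=
  div_le_div_of_nonneg_right (h j hj) j.cast_nonneg

lemma avgSeq_le (h : WeakMajorizes a b n) : avgSeq b n ≤ avgSeq a n := by
  simpa only [avgSeq_eq_topAvg] using h.topAvg_le le_rfl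

lemma convex_combination_le (h : WeakMajorizes a b n) {ε : ℝ} (hε : ε ∈ Set.Icc (0 : ℝ) 1)
    {m : ℕ} (hm : m ≤ n) :
    ε * avgSeq b n + (1 - ε) * topAvg b n m ≤ ε * avgSeq a n + (1 - ε) * topAvg a n m := by
  have hε' : 0 ≤ 1 - ε := sub_nonneg.2 hε.2
  gcongr
  exacts [hε.1, h.avgSeq_le, h.topAvg_le hm]

lemma succ (h : WeakMajorizes a b n) (hnext : b (n + 1) ≤ a (n + 1)) :
    WeakMajorizes a b (n + 1) := by
  intro j hj
  refine topSum_le b hj fun T hT hc => ?_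
  by_cases hmem : n + 1 ∈ T
  · obtain ⟨j, rfl⟩ : ∃ i, j = i + 1 := Nat.exists_eq_add_one.2 (hc ▸ card_pos.2 ⟨_, hmem⟩)
    have hT' := subset_Icc_of_notMem ((erase_subset _ T).trans hT) (notMem_erase _ T)
    have hc' : #(T.erase (n + 1)) = j := by rw [card_erase_of_mem hmem, hc]; rfl
    have hjn : j ≤ n := by simpa [hc'] using card_le_card hT'
    calc ∑ i ∈ T, b i = ∑ i ∈ T.erase (n + 1), b i + b (n + 1) := (sum_erase_add T b hmem).symm
      _ ≤ topSum a n j + a (n + 1) := add_le_add ((le_topSum b hT' hc').trans (h j hjn)) hnext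
      _ ≤ topSum a (n + 1) (j + 1) := topSum_add_le_topSum_succ a hjn
  · have hT' := subset_Icc_of_notMem hT hmem
    have hjn : j ≤ n := by simpa [hc] using card_le_card hT'
    calc ∑ i ∈ T, b i ≤ topSum b n j := le_topSum b hT' hc
      _ ≤ topSum a n j := h j hjn
      _ ≤ topSum a (n + 1) j := topSum_le_topSum_succ a hjn

end WeakMajorizes

theorem stmt1_general (a b : ℕ → ℝ) (ε : ℕ → ℝ) (m : ℕ → ℕ) (k : ℕ)
    (hε : ∀ n, ε n ∈ Set.Icc (0 : ℝ) 1) (hm : ∀ n, k ≤ n → 1 ≤ m n ∧ m n ≤ n)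
    (hmaj : ∀ j, 1 ≤ j → j ≤ k → topSum b k j ≤ topSum a k j)
    (ha : ∀ n, k ≤ n → a (n + 1) = ε n * avgSeq a n + (1 - ε n) * topAvg a n (m n))
    (hb : ∀ n, k ≤ n → b (n + 1) ≤ ε n * avgSeq b n + (1 - ε n) * topAvg b n (m n)) :
    (∀ M, k ≤ M → ∀ j, 1 ≤ j → j ≤ M → topSum b M j ≤ topSum a M j) ∧
    (∀ M, k + 1 ≤ M → b M ≤ a M) := by
  have hnext : ∀ n, k ≤ n → WeakMajorizes a b n → b (n + 1) ≤ a (n + 1) := fun n hn h =>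
    (hb n hn).trans ((h.convex_combination_le (hε n) (hm n hn).2).trans_eq (ha n hn).symm)
  have hall : ∀ M, k ≤ M → WeakMajorizes a b M := by
    intro M hM
    induction M, hM using Nat.le_induction with
    | base => exact weakMajorizes_iff.2 hmaj
    | succ n hn ih => exact ih.succ (hnext n hn ih)
  refine ⟨fun M hM => weakMajorizes_iff.1 (hall M hM), fun M hM => ?_⟩
  obtain ⟨n, rfl⟩ : ∃ n, M = n + 1 := Nat.exists_eq_add_one.2 (by omega)
  exact hnext n (by omega) (hall n (by omega))

/-- the majorization lemma. -/
theorem stmt1 (a b : ℕ → ℝ) (ε : ℕ → ℝ) (m : ℕ → ℕ) (k : ℕ) (hk : 1 ≤ k)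
    (hε : ∀ n, ε n ∈ Set.Icc (0 : ℝ) 1) (hm : ∀ n, k ≤ n → 1 ≤ m n ∧ m n ≤ n)
    (hmaj : ∀ j, 1 ≤ j → j ≤ k → topSum b k j ≤ topSum a k j)
    (ha : ∀ n, k ≤ n → a (n + 1) = ε n * avgSeq a n + (1 - ε n) * topAvg a n (m n))
    (hb : ∀ n, k ≤ n → b (n + 1) ≤ ε n * avgSeq b n + (1 - ε n) * topAvg b n (m n)) :
    (∀ M, k ≤ M → ∀ j, 1 ≤ j → j ≤ M → topSum b M j ≤ topSum a M j) ∧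
    (∀ M, k + 1 ≤ M → b M ≤ a M) :=
  stmt1_general a b ε m k hε hm hmaj ha hb
end

section
/- Reverse majorization: Let $\{\delta_n n\}_{n \ge k}$ be non-decreasing with $\delta_n \in (0,1]$. Suppose two sequences satisfy $a_{n+1} = \varepsilon_n \bar a_n + (1-\varepsilon_n)\bar a^{(n)}_{\delta_n n}$ and $b_{n+1} = \varepsilon_n \bar b_n + (1-\varepsilon_n)\bar b^{(n)}_{\delta_n n}$ for $n \ge k$, and there is $m \le \delta_k k$ such that the $m$ largest initial terms of $b$ all equal the average of the $m$ largest initial terms of $a$, while all other initial terms agree: $b^{(k)}_j = a^{(k)}_j$ for $m < j \le k$. If $b_n \le a^{(k)}_m$ for all $n > k$, then $a_n = b_n$ for all $n > k$. -/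
open Finset Filter MeasureTheory

/-!
Write `S^a_n(j)` for the sum of the `j` largest of `a 1, …, a n`. The initial data say exactly
that `S^a_k(j) = S^b_k(j)` for `m ≤ j ≤ k`. While the two sequences agree after `k`, the new
terms are at most `a^{(k)}_m ≤ b^{(k)}_m`, so the top `m` initial terms of either sequence stay
on top; below them the initial terms of `a` and of `b` have the same top-sum profile and the new
terms are shared, hence `S^a_n(j) = S^b_n(j)` for `m ≤ j ≤ n`. Both the average (`j = n`) and
the top-`δ_n n` average (`j = d n ≥ m`) are read off this profile, so the next terms agree too.
-/

section

variable {ι : Type*} (a : ι → ℝ)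

noncomputable def topSumOn (F : Finset ι) (j : ℕ) : ℝ :=
  sSup {x | ∃ S : Finset ι, S ⊆ F ∧ S.card = j ∧ x = ∑ i ∈ S, a i}

lemma topSumOn_eq_sSup_image (F : Finset ι) (j : ℕ) :
    topSumOn a F j = sSup ↑((F.powersetCard j).image fun S => ∑ i ∈ S, a i) := by
  rw [topSumOn]
  congr 1
  ext x
  simp [eq_comm, and_assoc]

lemma sum_le_topSumOn {F S : Finset ι} (hS : S ⊆ F) :
    ∑ i ∈ S, a i ≤ topSumOn a F S.card := by
  rw [topSumOn_eq_sSup_image]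
  exact le_csSup (Finset.bddAbove _) (by simp only [coe_image]; exact ⟨S, by simp [hS], rfl⟩)

lemma exists_sum_eq_topSumOn {F : Finset ι} {j : ℕ} (hj : j ≤ F.card) :
    ∃ S ⊆ F, S.card = j ∧ ∑ i ∈ S, a i = topSumOn a F j := by
  obtain ⟨S, hS, hmax⟩ := (F.powersetCard j).exists_max_image (fun S => ∑ i ∈ S, a i)
    (powersetCard_nonempty.mpr hj)
  obtain ⟨hSF, hSc⟩ := mem_powersetCard.mp hS
  refine ⟨S, hSF, hSc, le_antisymm (hSc ▸ sum_le_topSumOn a hSF) ?_⟩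
  rw [topSumOn_eq_sSup_image]
  refine csSup_le (coe_nonempty.mpr (image_nonempty.mpr ⟨S, hS⟩)) ?_
  simp only [coe_image, Set.forall_mem_image]
  exact hmax

lemma topSumOn_zero (F : Finset ι) : topSumOn a F 0 = 0 := by
  obtain ⟨S, -, hS, hsum⟩ := exists_sum_eq_topSumOn a (Nat.zero_le F.card)
  rw [← hsum, card_eq_zero.mp hS, sum_empty]

lemma topSumOn_card (F : Finset ι) : topSumOn a F F.card = ∑ i ∈ F, a i := by
  obtain ⟨S, hSF, hS, hsum⟩ := exists_sum_eq_topSumOn a le_rfl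
  rw [← hsum, eq_of_subset_of_card_le hSF hS.ge]

lemma topSumOn_congr {b : ι → ℝ} {F : Finset ι} (h : ∀ i ∈ F, a i = b i) (j : ℕ) :
    topSumOn a F j = topSumOn b F j := by
  simp only [topSumOn_eq_sSup_image]
  congr 2
  refine image_congr fun S hS => sum_congr rfl fun i hi => h i ?_
  exact (mem_powersetCard.mp hS).1 hi

lemma sum_le_sum_of_forall_le_of_card_eq {R U : Finset ι} (hc : R.card = U.card)
    (h : ∀ r ∈ R, ∀ u ∈ U, a r ≤ a u) : ∑ i ∈ R, a i ≤ ∑ i ∈ U, a i := by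
  rcases U.eq_empty_or_nonempty with rfl | hU
  · simp [card_eq_zero.mp hc]
  · calc ∑ i ∈ R, a i ≤ R.card • U.inf' hU a :=
          sum_le_card_nsmul R a _ fun r hr => le_inf' hU _ fun u hu => h r hr u hu
      _ = U.card • U.inf' hU a := by rw [hc]
      _ ≤ ∑ i ∈ U, a i := card_nsmul_le_sum U a _ fun u hu => inf'_le a hu

variable [DecidableEq ι]

lemma le_of_sum_eq_topSumOn {F S : Finset ι} (hSF : S ⊆ F)
    (hS : ∑ i ∈ S, a i = topSumOn a F S.card) {t i : ι} (ht : t ∈ S) (hi : i ∈ F \ S) :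
    a i ≤ a t := by
  obtain ⟨hiF, hiS⟩ := mem_sdiff.mp hi
  have hiS' : i ∉ S.erase t := fun h => hiS (mem_of_mem_erase h)
  have hsub : insert i (S.erase t) ⊆ F :=
    insert_subset hiF ((erase_subset t S).trans hSF)
  have hcard : (insert i (S.erase t)).card = S.card := by
    rw [card_insert_of_notMem hiS', card_erase_add_one ht]
  have hle := sum_le_topSumOn a hsub
  rw [hcard, ← hS, sum_insert hiS', sum_erase_eq_sub ht] at hle
  linarith

lemma sub_topSumOn_pred_le {F S : Finset ι} (hSF : S ⊆ F)
    (hS : ∑ i ∈ S, a i = topSumOn a F S.card) {t : ι} (ht : t ∈ S) :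
    topSumOn a F S.card - topSumOn a F (S.card - 1) ≤ a t := by
  have hle := sum_le_topSumOn a ((erase_subset t S).trans hSF)
  rw [card_erase_of_mem ht, sum_erase_eq_sub ht, hS] at hle
  linarith

lemma add_topSumOn_le_topSumOn_union {F E : Finset ι} (h : Disjoint F E) {c e : ℕ}
    (hc : c ≤ F.card) (he : e ≤ E.card) :
    topSumOn a F c + topSumOn a E e ≤ topSumOn a (F ∪ E) (c + e) := by
  obtain ⟨S, hSF, rfl, hS⟩ := exists_sum_eq_topSumOn a hc
  obtain ⟨T, hTE, rfl, hT⟩ := exists_sum_eq_topSumOn a he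
  have hST : Disjoint S T := h.mono hSF hTE
  rw [← hS, ← hT, ← sum_union hST, ← card_union_of_disjoint hST]
  exact sum_le_topSumOn a (union_subset_union hSF hTE)

lemma exists_topSumOn_union_le_add {F E : Finset ι} (h : Disjoint F E) {j : ℕ}
    (hj : j ≤ (F ∪ E).card) :
    ∃ c e, c + e = j ∧ c ≤ F.card ∧ e ≤ E.card ∧
      topSumOn a (F ∪ E) j ≤ topSumOn a F c + topSumOn a E e := by
  obtain ⟨S, hSFE, rfl, hS⟩ := exists_sum_eq_topSumOn a hj
  have hsplit : S ∩ F ∪ S ∩ E = S := by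
    rw [← inter_union_distrib_left, inter_eq_left.mpr hSFE]
  have hdisj : Disjoint (S ∩ F) (S ∩ E) := h.mono inter_subset_right inter_subset_right
  refine ⟨(S ∩ F).card, (S ∩ E).card, ?_, card_le_card inter_subset_right,
    card_le_card inter_subset_right, ?_⟩
  · rw [← card_union_of_disjoint hdisj, hsplit]
  · have hsum : ∑ i ∈ S, a i = ∑ i ∈ S ∩ F, a i + ∑ i ∈ S ∩ E, a i := by
      rw [← sum_union hdisj, hsplit]
    rw [← hS, hsum]
    exact add_le_add (sum_le_topSumOn a inter_subset_right)
      (sum_le_topSumOn a inter_subset_right)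

lemma topSumOn_union_le {b : ι → ℝ} {F G E : Finset ι} (hF : Disjoint F E) (hG : Disjoint G E)
    (hcard : F.card ≤ G.card) (hFG : ∀ c ≤ F.card, topSumOn a F c ≤ topSumOn b G c)
    (hE : ∀ i ∈ E, a i = b i) {j : ℕ} (hj : j ≤ F.card + E.card) :
    topSumOn a (F ∪ E) j ≤ topSumOn b (G ∪ E) j := by
  obtain ⟨c, e, rfl, hc, he, hle⟩ :=
    exists_topSumOn_union_le_add a hF (j := j) (by rwa [card_union_of_disjoint hF])
  calc topSumOn a (F ∪ E) (c + e) ≤ topSumOn a F c + topSumOn a E e := hle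
    _ ≤ topSumOn b G c + topSumOn b E e := add_le_add (hFG c hc) (topSumOn_congr a hE e).le
    _ ≤ topSumOn b (G ∪ E) (c + e) := add_topSumOn_le_topSumOn_union b hG (hc.trans hcard) he

/-- Exchange argument: all but `#S - #T` elements of `S \ T` are traded for the elements of
`T \ S`, each of which is at least as large. -/
lemma sum_le_sum_add_topSumOn_sdiff {F T S : Finset ι}
    (hdom : ∀ t ∈ T, ∀ i ∈ F \ T, a i ≤ a t) (hSF : S ⊆ F) (hTS : T.card ≤ S.card) :
    ∑ i ∈ S, a i ≤ ∑ i ∈ T, a i + topSumOn a (F \ T) (S.card - T.card) := by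
  have hU : S \ T ⊆ F \ T := sdiff_subset_sdiff hSF le_rfl
  have hcardU := card_inter_add_card_sdiff S T
  have hcardT := card_sdiff_add_card_inter T S
  rw [inter_comm] at hcardT
  obtain ⟨V, hVU, hVc⟩ := exists_subset_card_eq (s := S \ T) (n := (T \ S).card) (by omega)
  have hswap : ∑ i ∈ V, a i ≤ ∑ i ∈ T \ S, a i :=
    sum_le_sum_of_forall_le_of_card_eq a hVc fun r hr u hu =>
      hdom u (mem_sdiff.mp hu).1 r (hU (hVU hr))
  have hrest : ∑ i ∈ (S \ T) \ V, a i ≤ topSumOn a (F \ T) (S.card - T.card) := by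
    have hc : ((S \ T) \ V).card = S.card - T.card := by rw [card_sdiff_of_subset hVU]; omega
    exact hc ▸ sum_le_topSumOn a (sdiff_subset.trans hU)
  have hS := sum_inter_add_sum_sdiff S T a
  have hT := sum_inter_add_sum_sdiff T S a
  have hSV := sum_sdiff hVU (f := a)
  rw [inter_comm] at hT
  linarith

lemma topSumOn_eq_sum_add_topSumOn_sdiff {F T : Finset ι} (hTF : T ⊆ F)
    (hdom : ∀ t ∈ T, ∀ i ∈ F \ T, a i ≤ a t) {j : ℕ} (hTj : T.card ≤ j)
    (hjF : j ≤ F.card) :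
    topSumOn a F j = ∑ i ∈ T, a i + topSumOn a (F \ T) (j - T.card) := by
  refine le_antisymm ?_ ?_
  · obtain ⟨S, hSF, rfl, hS⟩ := exists_sum_eq_topSumOn a hjF
    exact hS ▸ sum_le_sum_add_topSumOn_sdiff a hdom hSF hTj
  · have h := add_topSumOn_le_topSumOn_union a disjoint_sdiff (c := T.card) (e := j - T.card)
      le_rfl (by rw [card_sdiff_of_subset hTF]; omega)
    rwa [topSumOn_card, union_sdiff_of_subset hTF, Nat.add_sub_cancel' hTj] at h

lemma topSumOn_sdiff_of_sum_eq {F T : Finset ι} (hTF : T ⊆ F)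
    (hT : ∑ i ∈ T, a i = topSumOn a F T.card) {c : ℕ} (hc : T.card + c ≤ F.card) :
    topSumOn a (F \ T) c = topSumOn a F (T.card + c) - ∑ i ∈ T, a i := by
  rw [topSumOn_eq_sum_add_topSumOn_sdiff a hTF
    (fun t ht i hi => le_of_sum_eq_topSumOn a hTF hT ht hi) (Nat.le_add_right _ _) hc,
    Nat.add_sub_cancel_left]
  ring

lemma le_of_sum_eq_topSumOn_union {F E T : Finset ι} (hTF : T ⊆ F)
    (hT : ∑ i ∈ T, a i = topSumOn a F T.card)
    (hE : ∀ i ∈ E, a i ≤ topSumOn a F T.card - topSumOn a F (T.card - 1))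
    {t i : ι} (ht : t ∈ T) (hi : i ∈ (F ∪ E) \ T) : a i ≤ a t := by
  rw [union_sdiff_distrib, mem_union] at hi
  rcases hi with hiF | hiE
  · exact le_of_sum_eq_topSumOn a hTF hT ht hiF
  · exact (hE i (mem_sdiff.mp hiE).1).trans (sub_topSumOn_pred_le a hTF hT ht)

theorem topSumOn_union_eq_of_forall_le {b : ι → ℝ} {F G E : Finset ι} {m : ℕ}
    (hF : Disjoint F E) (hG : Disjoint G E) (hcard : F.card = G.card) (hm : m ≤ F.card)
    (hFG : ∀ j, m ≤ j → j ≤ F.card → topSumOn a F j = topSumOn b G j)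
    (hE : ∀ i ∈ E, a i = b i)
    (haE : ∀ i ∈ E, a i ≤ topSumOn a F m - topSumOn a F (m - 1))
    (hbE : ∀ i ∈ E, b i ≤ topSumOn b G m - topSumOn b G (m - 1))
    {j : ℕ} (hmj : m ≤ j) (hj : j ≤ (F ∪ E).card) :
    topSumOn a (F ∪ E) j = topSumOn b (G ∪ E) j := by
  obtain ⟨Ta, hTaF, rfl, hTa⟩ := exists_sum_eq_topSumOn a hm
  obtain ⟨Tb, hTbG, hTbc, hTb⟩ := exists_sum_eq_topSumOn b (hcard ▸ hm)
  rw [← hTbc] at hbE hTb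
  have hsum : ∑ i ∈ Ta, a i = ∑ i ∈ Tb, b i := by rw [hTa, hTb, hTbc, hFG _ le_rfl hm]
  have hres : ∀ c ≤ (F \ Ta).card, topSumOn a (F \ Ta) c = topSumOn b (G \ Tb) c := by
    intro c hc
    rw [card_sdiff_of_subset hTaF] at hc
    rw [topSumOn_sdiff_of_sum_eq a hTaF hTa (by omega),
      topSumOn_sdiff_of_sum_eq b hTbG hTb (by omega), hsum, hTbc, hFG _ (by omega) (by omega)]
  have hcard' : (F \ Ta).card = (G \ Tb).card := by
    rw [card_sdiff_of_subset hTaF, card_sdiff_of_subset hTbG, hcard, hTbc]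
  have hsplit {H T : Finset ι} (hTH : T ⊆ H) (hHE : Disjoint H E) :
      (H ∪ E) \ T = H \ T ∪ E := by
    rw [union_sdiff_distrib, sdiff_eq_self_of_disjoint (hHE.symm.mono_right hTH)]
  have hjE : j - Ta.card ≤ (F \ Ta).card + E.card := by
    rw [card_sdiff_of_subset hTaF]
    rw [card_union_of_disjoint hF] at hj
    omega
  rw [topSumOn_eq_sum_add_topSumOn_sdiff a (subset_union_left.trans' hTaF)
      (fun t ht i hi => le_of_sum_eq_topSumOn_union a hTaF hTa haE ht hi) hmj hj,
    topSumOn_eq_sum_add_topSumOn_sdiff b (subset_union_left.trans' hTbG)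
      (fun t ht i hi => le_of_sum_eq_topSumOn_union b hTbG hTb hbE ht hi) (hTbc ▸ hmj)
      (by rwa [card_union_of_disjoint hG, ← hcard, ← card_union_of_disjoint hF]),
    hsplit hTaF hF, hsplit hTbG hG, hsum, hTbc]
  congr 1
  exact le_antisymm
    (topSumOn_union_le a (hF.mono_left sdiff_subset) (hG.mono_left sdiff_subset) hcard'.le
      (fun c hc => (hres c hc).le) hE hjE)
    (topSumOn_union_le b (hG.mono_left sdiff_subset) (hF.mono_left sdiff_subset) hcard'.ge
      (fun c hc => (hres c (hcard' ▸ hc)).ge) (fun i hi => (hE i hi).symm) (hcard' ▸ hjE))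

end

lemma topSum_eq_topSumOn (a : ℕ → ℝ) (n j : ℕ) :
    topSum a n j = topSumOn a (Icc 1 n) j :=
  rfl

lemma sum_Icc_eq_topSum (a : ℕ → ℝ) (n : ℕ) : ∑ i ∈ Icc 1 n, a i = topSum a n n := by
  rw [topSum_eq_topSumOn]
  simpa using (topSumOn_card a (Icc 1 n)).symm

lemma topSum_eq_sum_ordStat (a : ℕ → ℝ) (n j : ℕ) :
    topSum a n j = ∑ i ∈ range j, ordStat a n (i + 1) := by
  simp only [ordStat, Nat.add_sub_cancel]
  rw [sum_range_sub (topSum a n), topSum_eq_topSumOn a n 0, topSumOn_zero, sub_zero]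

lemma ordStat_le_topAvg (a : ℕ → ℝ) {n m : ℕ} (hm : 1 ≤ m) (hmn : m ≤ n) :
    ordStat a n m ≤ topAvg a n m := by
  obtain ⟨T, hT, rfl, hsum⟩ := exists_sum_eq_topSumOn a (F := Icc 1 n) (j := m) (by simpa)
  have hle : T.card • ordStat a n T.card ≤ ∑ i ∈ T, a i :=
    card_nsmul_le_sum T a _ fun t ht => sub_topSumOn_pred_le a hT hsum ht
  rw [topAvg, le_div_iff₀ (by exact_mod_cast hm), mul_comm, ← nsmul_eq_mul]
  exact hle.trans_eq hsum

lemma topSum_eq_of_ordStat_eq {a b : ℕ → ℝ} {k m : ℕ} (hm : 1 ≤ m)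
    (hbig : ∀ j, 1 ≤ j → j ≤ m → ordStat b k j = topAvg a k m)
    (hsmall : ∀ j, m < j → j ≤ k → ordStat b k j = ordStat a k j)
    {j : ℕ} (hmj : m ≤ j) (hjk : j ≤ k) : topSum b k j = topSum a k j := by
  have hhead : ∑ i ∈ range m, ordStat b k (i + 1) = ∑ i ∈ range m, ordStat a k (i + 1) := by
    rw [sum_congr rfl fun i hi => hbig (i + 1) (by omega) (by rw [mem_range] at hi; omega),
      sum_const, card_range, nsmul_eq_mul, topAvg,
      mul_div_cancel₀ _ (by positivity), topSum_eq_sum_ordStat]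
  rw [topSum_eq_sum_ordStat, topSum_eq_sum_ordStat, ← sum_range_add_sum_Ico _ hmj,
    ← sum_range_add_sum_Ico _ hmj, hhead]
  exact congrArg _ <| sum_congr rfl fun i hi => by
    rw [mem_Ico] at hi
    exact hsmall (i + 1) (by omega) (by omega)

section

variable {α : Type*} [LinearOrder α] [LocallyFiniteOrder α]

lemma Icc_union_Ioc_eq_Icc {a b c : α} (hab : a ≤ b) (hbc : b ≤ c) :
    Icc a b ∪ Ioc b c = Icc a c := by
  rw [← coe_inj]
  push_cast
  exact Set.Icc_union_Ioc_eq_Icc hab hbc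

lemma disjoint_Icc_Ioc (a b c : α) : Disjoint (Icc a b) (Ioc b c) :=
  disjoint_left.mpr fun _ h₁ h₂ => (mem_Icc.mp h₁).2.not_gt (mem_Ioc.mp h₂).1

end

lemma topSum_eq_of_eqOn_Ioc {a b : ℕ → ℝ} {k m n : ℕ} (hk : 1 ≤ k) (hkn : k ≤ n)
    (hm : 1 ≤ m) (hmk : m ≤ k)
    (hbig : ∀ j, 1 ≤ j → j ≤ m → ordStat b k j = topAvg a k m)
    (hsmall : ∀ j, m < j → j ≤ k → ordStat b k j = ordStat a k j)
    (hab : ∀ i ∈ Ioc k n, a i = b i) (hb : ∀ i ∈ Ioc k n, b i ≤ ordStat a k m)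
    {j : ℕ} (hmj : m ≤ j) (hjn : j ≤ n) : topSum a n j = topSum b n j := by
  have hord : ordStat a k m ≤ ordStat b k m := hbig m hm le_rfl ▸ ordStat_le_topAvg a hm hmk
  rw [topSum_eq_topSumOn, topSum_eq_topSumOn, ← Icc_union_Ioc_eq_Icc hk hkn]
  exact topSumOn_union_eq_of_forall_le a (disjoint_Icc_Ioc 1 k n) (disjoint_Icc_Ioc 1 k n) rfl
    (by simpa)
    (fun j hmj hjk => (topSum_eq_of_ordStat_eq hm hbig hsmall hmj (by simpa using hjk)).symm)
    hab (fun i hi => (hab i hi).trans_le (hb i hi)) (fun i hi => (hb i hi).trans hord) hmj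
    (by rwa [Icc_union_Ioc_eq_Icc hk hkn, Nat.card_Icc, Nat.add_sub_cancel])

theorem stmt3_general (a b : ℕ → ℝ) (ε : ℕ → ℝ) (d : ℕ → ℕ) (k m : ℕ) (hk : 1 ≤ k)
    (hd : ∀ n, k ≤ n → 1 ≤ d n ∧ d n ≤ n)
    (hdmono : ∀ n, k ≤ n → d n ≤ d (n + 1))
    (hm1 : 1 ≤ m) (hmk : m ≤ d k)
    (ha : ∀ n, k ≤ n → a (n + 1) = ε n * avgSeq a n + (1 - ε n) * topAvg a n (d n))
    (hb : ∀ n, k ≤ n → b (n + 1) = ε n * avgSeq b n + (1 - ε n) * topAvg b n (d n))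
    (hbinit1 : ∀ j, 1 ≤ j → j ≤ m → ordStat b k j = topAvg a k m)
    (hbinit2 : ∀ j, m < j → j ≤ k → ordStat b k j = ordStat a k j)
    (hbd : ∀ n, k < n → b n ≤ ordStat a k m) :
    ∀ n, k < n → a n = b n := by
  have hmk' : m ≤ k := hmk.trans (hd k le_rfl).2
  have hmd : ∀ n, k ≤ n → m ≤ d n := fun n hn =>
    hmk.trans (Nat.le_induction le_rfl (fun n hkn ih => ih.trans (hdmono n hkn)) n hn)
  have hstep : ∀ n, k ≤ n → (∀ i ∈ Ioc k n, a i = b i) → a (n + 1) = b (n + 1) := by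
    intro n hkn hab
    have htop {j : ℕ} := topSum_eq_of_eqOn_Ioc (j := j) hk hkn hm1 hmk' hbinit1 hbinit2 hab
      fun i hi => hbd i (mem_Ioc.mp hi).1
    rw [ha n hkn, hb n hkn, avgSeq, avgSeq, sum_Icc_eq_topSum, sum_Icc_eq_topSum,
      htop (hmk'.trans hkn) le_rfl, topAvg, topAvg, htop (hmd n hkn) (hd n hkn).2]
  have hagree : ∀ n, k ≤ n → ∀ i ∈ Ioc k n, a i = b i := by
    refine Nat.le_induction (by simp) fun n hkn ih i hi => ?_
    rcases (mem_Ioc.mp hi).2.lt_or_eq with hin | rfl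
    · exact ih i (mem_Ioc.mpr ⟨(mem_Ioc.mp hi).1, Nat.lt_succ_iff.mp hin⟩)
    · exact hstep n hkn ih
  exact fun n hn => hagree n hn.le n (mem_Ioc.mpr ⟨hn, le_rfl⟩)

/-- reverse majorization. -/
theorem stmt3 (a b : ℕ → ℝ) (ε : ℕ → ℝ) (d : ℕ → ℕ) (k m : ℕ) (hk : 1 ≤ k)
    (hε : ∀ n, ε n ∈ Set.Icc (0 : ℝ) 1)
    (hd : ∀ n, k ≤ n → 1 ≤ d n ∧ d n ≤ n)
    (hdmono : ∀ n, k ≤ n → d n ≤ d (n + 1))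
    (hm1 : 1 ≤ m) (hmk : m ≤ d k)
    (ha : ∀ n, k ≤ n → a (n + 1) = ε n * avgSeq a n + (1 - ε n) * topAvg a n (d n))
    (hb : ∀ n, k ≤ n → b (n + 1) = ε n * avgSeq b n + (1 - ε n) * topAvg b n (d n))
    (hbinit1 : ∀ j, 1 ≤ j → j ≤ m → ordStat b k j = topAvg a k m)
    (hbinit2 : ∀ j, m < j → j ≤ k → ordStat b k j = ordStat a k j)
    (hbd : ∀ n, k < n → b n ≤ ordStat a k m) :
    ∀ n, k < n → a n = b n :=
  stmt3_general a b ε d k m hk hd hdmono hm1 hmk ha hb hbinit1 hbinit2 hbd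
end

section
/- With $u_n$ and $\Delta_n = n(u_n - \bar u_n)$ as in the recursion $u_{n+1} = \varepsilon_n \bar u_n + (1-\varepsilon_n)u_n + \gamma k/(\delta_n n)$ with $u_1=\dots=u_k=0$: if the sequence $\{\varepsilon_n \delta_n\}_{n \ge k}$ is non-increasing, then $\Delta_n \le \gamma k/(\varepsilon_n \delta_n)$ for all $n \ge k$. -/
open Finset Filter MeasureTheory

/-
Writing `Δ n = n (u n - ū n)`, the identity `(n+1) ū (n+1) = n ū n + u (n+1)` gives
`Δ (n+1) = n (u (n+1) - ū n)`, and the recursion turns this into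
`Δ (n+1) = (1 - ε n) Δ n + γ k / δ n`. The bound `c / ε` is a fixed point of
`x ↦ (1 - ε) x + c`, so it propagates by induction from `Δ k = 0`, and the
monotonicity of `ε δ` only makes the next bound weaker.
-/

lemma avgSeq_eq_zero_of_forall_le {a : ℕ → ℝ} {n : ℕ} (h : ∀ j, j ≤ n → a j = 0) :
    avgSeq a n = 0 := by
  rw [avgSeq, Finset.sum_eq_zero fun j hj => h j (Finset.mem_Icc.mp hj).2, zero_div]

lemma succ_mul_sub_avgSeq_succ (a : ℕ → ℝ) {n : ℕ} (hn : n ≠ 0) :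
    ((n + 1 : ℕ) : ℝ) * (a (n + 1) - avgSeq a (n + 1)) = n * (a (n + 1) - avgSeq a n) := by
  have hn' : (n : ℝ) ≠ 0 := Nat.cast_ne_zero.mpr hn
  simp only [avgSeq, Finset.sum_Icc_succ_top (Nat.le_add_left 1 n)]
  push_cast
  field_simp
  ring

lemma one_sub_mul_add_le_div {x c e : ℝ} (he : e ∈ Set.Ioc (0 : ℝ) 1) (hx : x ≤ c / e) :
    (1 - e) * x + c ≤ c / e := by
  have hfix : (1 - e) * (c / e) + c = c / e := by
    field_simp [he.1.ne']
    ring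
  linarith [mul_le_mul_of_nonneg_left hx (sub_nonneg.mpr he.2)]

/-- upper bound `Δ n ≤ γ k / (ε n δ n)` when `ε δ` is non-increasing. -/
theorem stmt5 (u : ℕ → ℝ) (ε δ : ℕ → ℝ) (γ : ℝ) (k : ℕ) (hk : 1 ≤ k) (hγ : 0 < γ)
    (hε : ∀ n, ε n ∈ Set.Ioc (0 : ℝ) 1) (hδ : ∀ n, δ n ∈ Set.Ioc (0 : ℝ) 1)
    (hmono : ∀ n, k ≤ n → ε (n + 1) * δ (n + 1) ≤ ε n * δ n)
    (hinit : ∀ j, j ≤ k → u j = 0)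
    (hrec : ∀ n, k ≤ n →
      u (n + 1) = ε n * avgSeq u n + (1 - ε n) * u n + γ * k / (δ n * n)) :
    ∀ n, k ≤ n → (n : ℝ) * (u n - avgSeq u n) ≤ γ * k / (ε n * δ n) := by
  have hpos : ∀ n, 0 < ε n * δ n := fun n => mul_pos (hε n).1 (hδ n).1
  intro n hn
  induction n, hn using Nat.le_induction with
  | base =>
    rw [hinit k le_rfl, avgSeq_eq_zero_of_forall_le hinit, sub_zero, mul_zero]
    exact div_nonneg (by positivity) (hpos k).le
  | succ n hn ih =>
    have hn0 : (n : ℝ) ≠ 0 := by exact_mod_cast (by omega : n ≠ 0)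
    have hδn : δ n ≠ 0 := (hδ n).1.ne'
    have hstep : ((n + 1 : ℕ) : ℝ) * (u (n + 1) - avgSeq u (n + 1)) =
        (1 - ε n) * (n * (u n - avgSeq u n)) + γ * k / δ n := by
      rw [succ_mul_sub_avgSeq_succ u (by omega), hrec n hn]
      field_simp
      ring
    have hdiv : γ * k / (ε n * δ n) = γ * k / δ n / ε n := by
      rw [div_div, mul_comm (δ n)]
    calc ((n + 1 : ℕ) : ℝ) * (u (n + 1) - avgSeq u (n + 1))
        ≤ γ * k / (ε n * δ n) := by
          rw [hstep, hdiv]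
          exact one_sub_mul_add_le_div (hε n) (hdiv ▸ ih)
      _ ≤ γ * k / (ε (n + 1) * δ (n + 1)) :=
          div_le_div_of_nonneg_left (by positivity) (hpos (n + 1)) (hmono n hn)
end

section
/- In the setting of the previous construction ($a_1,\dots,a_{\gamma k}=1$, the rest $0$, and $a_{n+1} \ge \varepsilon\bar a_n + (1-\varepsilon)$ for $k \le n \le 2n_0$ where $n_0 = \gamma k/(4\delta)$), writing $\bar a_n = 1 - d_n$, one has $d_{n+1} \le d_n(1 - (1-\varepsilon)/(n+1))$ for $k \le n \le 2n_0$, and hence $d_n \le ((k+1)/(n+1))^{1-\varepsilon}$ for $k \le n \le 2n_0$. -/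
open Finset Filter MeasureTheory

/-- Holds also for `n = 0`, where `avgSeq a 0 = 0 / 0 = 0` and the sum is empty. -/
lemma natCast_mul_avgSeq (a : ℕ → ℝ) (n : ℕ) : (n : ℝ) * avgSeq a n = ∑ j ∈ Icc 1 n, a j := by
  rcases Nat.eq_zero_or_pos n with rfl | hn
  · simp
  · exact mul_div_cancel₀ _ (by positivity)

lemma avgSeq_succ (a : ℕ → ℝ) (n : ℕ) :
    avgSeq a (n + 1) = ((n : ℝ) * avgSeq a n + a (n + 1)) / ((n : ℝ) + 1) := by
  rw [natCast_mul_avgSeq, ← sum_Icc_succ_top (by omega), avgSeq, Nat.cast_succ]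

lemma avgSeq_nonneg {a : ℕ → ℝ} (ha : ∀ n, 0 ≤ a n) (n : ℕ) : 0 ≤ avgSeq a n :=
  div_nonneg (sum_nonneg fun j _ => ha j) n.cast_nonneg

lemma one_sub_avgSeq_succ_le {a : ℕ → ℝ} {ε : ℝ} {n : ℕ}
    (h : ε * avgSeq a n + (1 - ε) ≤ a (n + 1)) :
    1 - avgSeq a (n + 1) ≤ (1 - avgSeq a n) * (1 - (1 - ε) / ((n : ℝ) + 1)) := by
  have hn : (0 : ℝ) < n + 1 := by positivity
  have hrhs : (1 - avgSeq a n) * (1 - (1 - ε) / ((n : ℝ) + 1)) * ((n : ℝ) + 1)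
      = (1 - avgSeq a n) * (n + ε) := by
    field_simp
    ring
  rw [avgSeq_succ, one_sub_div hn.ne', div_le_iff₀ hn, hrhs]
  nlinarith

lemma one_sub_div_le_div_add_one_rpow {t p : ℝ} (ht : 0 < t) (hp0 : 0 ≤ p) (hp1 : p ≤ 1) :
    1 - p / t ≤ (t / (t + 1)) ^ p := by
  rcases lt_or_ge (1 - p / t) 0 with hneg | hnonneg
  · exact hneg.le.trans (by positivity)
  have bernoulli : (1 + 1 / t) ^ p ≤ 1 + p / t := by
    simpa only [mul_one_div] using
      rpow_one_add_le_one_add_mul_self (s := 1 / t) (by linarith [one_div_pos.2 ht]) hp0 hp1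
  have hinv : (t / (t + 1)) ^ p = 1 / (1 + 1 / t) ^ p := by
    rw [one_div, ← Real.inv_rpow (by positivity)]
    congr 1
    field_simp
  rw [hinv, le_div_iff₀ (by positivity)]
  calc (1 - p / t) * (1 + 1 / t) ^ p
      ≤ (1 - p / t) * (1 + p / t) := mul_le_mul_of_nonneg_left bernoulli hnonneg
    _ ≤ 1 := by nlinarith [sq_nonneg (p / t)]

lemma le_div_rpow_of_le_mul_one_sub_div {d : ℕ → ℝ} {p N : ℝ} {k : ℕ}
    (hp : p ∈ Set.Icc (0 : ℝ) 1) (hk : d k ≤ 1)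
    (hstep : ∀ n : ℕ, k ≤ n → (n : ℝ) ≤ N → d (n + 1) ≤ d n * (1 - p / ((n : ℝ) + 1))) :
    ∀ n : ℕ, k ≤ n → (n : ℝ) ≤ N → d n ≤ (((k : ℝ) + 1) / ((n : ℝ) + 1)) ^ p := by
  intro n hn
  induction n, hn using Nat.le_induction with
  | base =>
    intro _
    rwa [div_self (by positivity), Real.one_rpow]
  | succ n hkn ih =>
    intro hN
    have hnN : (n : ℝ) ≤ N := by push_cast at hN; linarith
    have hfactor : 0 ≤ 1 - p / ((n : ℝ) + 1) := by
      rw [sub_nonneg, div_le_one (by positivity)]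
      linarith [hp.2, n.cast_nonneg (α := ℝ)]
    have htelescope : (((k : ℝ) + 1) / ((n : ℝ) + 1)) ^ p * (((n : ℝ) + 1) / ((n : ℝ) + 1 + 1)) ^ p
        = (((k : ℝ) + 1) / (((n + 1 : ℕ) : ℝ) + 1)) ^ p := by
      rw [← Real.mul_rpow (by positivity) (by positivity)]
      congr 1
      field_simp
      push_cast
      ring
    calc d (n + 1) ≤ d n * (1 - p / ((n : ℝ) + 1)) := hstep n hkn hnN
      _ ≤ (((k : ℝ) + 1) / ((n : ℝ) + 1)) ^ p * (1 - p / ((n : ℝ) + 1)) :=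
        mul_le_mul_of_nonneg_right (ih hnN) hfactor
      _ ≤ (((k : ℝ) + 1) / ((n : ℝ) + 1)) ^ p * (((n : ℝ) + 1) / ((n : ℝ) + 1 + 1)) ^ p :=
        mul_le_mul_of_nonneg_left
          (one_sub_div_le_div_add_one_rpow (by positivity) hp.1 hp.2) (by positivity)
      _ = _ := htelescope

theorem stmt8_general (a : ℕ → ℝ) (ε δ γ : ℝ) (k : ℕ)
    (hε : ε ∈ Set.Ioc (0 : ℝ) (1 / 2))
    (hbdd : ∀ n, a n ∈ Set.Icc (0 : ℝ) 1)
    (hrec : ∀ n : ℕ, k ≤ n → (n : ℝ) ≤ 2 * (γ * k / (4 * δ)) →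
      ε * avgSeq a n + (1 - ε) ≤ a (n + 1)) :
    (∀ n : ℕ, k ≤ n → (n : ℝ) ≤ 2 * (γ * k / (4 * δ)) →
      1 - avgSeq a (n + 1) ≤ (1 - avgSeq a n) * (1 - (1 - ε) / ((n : ℝ) + 1))) ∧
    (∀ n : ℕ, k ≤ n → (n : ℝ) ≤ 2 * (γ * k / (4 * δ)) →
      1 - avgSeq a n ≤ (((k : ℝ) + 1) / ((n : ℝ) + 1)) ^ (1 - ε)) := by
  have step := fun n hn hN => one_sub_avgSeq_succ_le (hrec n hn hN)
  have hd_k : 1 - avgSeq a k ≤ 1 := by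
    linarith [avgSeq_nonneg (fun n => (hbdd n).1) k]
  exact ⟨step, le_div_rpow_of_le_mul_one_sub_div
    ⟨by linarith [hε.2], by linarith [hε.1]⟩ hd_k step⟩

/-- decay of `d n = 1 - ū n` in the divergence construction. -/
theorem stmt8 (a : ℕ → ℝ) (ε δ γ : ℝ) (k g : ℕ)
    (hε : ε ∈ Set.Ioc (0 : ℝ) (1 / 2)) (hδ : 0 < δ) (hγ : 0 < γ)
    (hg : (g : ℝ) = γ * k) (hg1 : 1 ≤ g) (hgk : g ≤ k)
    (hinit1 : ∀ j, 1 ≤ j → j ≤ g → a j = 1)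
    (hinit0 : ∀ j, g < j → j ≤ k → a j = 0)
    (hbdd : ∀ n, a n ∈ Set.Icc (0 : ℝ) 1)
    (hrec : ∀ n : ℕ, k ≤ n → (n : ℝ) ≤ 2 * (γ * k / (4 * δ)) →
      ε * avgSeq a n + (1 - ε) ≤ a (n + 1)) :
    (∀ n : ℕ, k ≤ n → (n : ℝ) ≤ 2 * (γ * k / (4 * δ)) →
      1 - avgSeq a (n + 1) ≤ (1 - avgSeq a n) * (1 - (1 - ε) / ((n : ℝ) + 1))) ∧
    (∀ n : ℕ, k ≤ n → (n : ℝ) ≤ 2 * (γ * k / (4 * δ)) →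
      1 - avgSeq a n ≤ (((k : ℝ) + 1) / ((n : ℝ) + 1)) ^ (1 - ε)) :=
  stmt8_general a ε δ γ k hε hbdd hrec
end

section
/- Divergent contraction series: Let $\alpha, \beta \ge 0$ with $\alpha + \beta/2 \le 1$, and $A,B,c,C > 0$. Define $\Delta_0 = 1$, $n_0 = k$, and recursively $n_{T+1} = n_T \cdot C/(\varepsilon_{n_{T+1}}^2 \delta_{n_{T+1}}^3 \Delta_T^2)$ (well-defined since $m\varepsilon_m^2\delta_m^3$ is eventually increasing), $\Delta_{T+1} = \Delta_T(1 - c\,\varepsilon_{n_{T+1}}\delta_{n_{T+1}}^{1/2})$, where $\varepsilon_n = A(\log n)^{-\alpha}$, $\delta_n = B(\log n)^{-\beta}$. Then $\Delta_T \to 0$ as $T \to \infty$. -/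
/-!
Each step multiplies `Δ` by `1 - x_T`, where
`x_T = c ε δ^{1/2} = c A √B (log n_{T+1})^{-(α+β/2)}`, so `Δ_T ≤ exp (-∑_{t<T} x_t)`.
If `Δ_T` stayed above some `L > 0`, the sum `∑ x_t` would converge, while the recursion
for `n` would give `log n_{T+1} ≤ log n_T + const + (2α+3β) log log n_{T+1}`, hence
`log n_T = O(T log T)`. As `α + β/2 ≤ 1`, this forces `x_T ≳ 1/(T log T)`, whose series
diverges by Cauchy condensation.
-/

open Filter

/-- The envelope floor `ε_x = A (log x)^{-α}`. -/
noncomputable def envEps (A α x : ℝ) : ℝ := A * Real.log x ^ (-α)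

/-- The envelope parameter `δ_x = B (log x)^{-β}`. -/
noncomputable def envDelta (B β x : ℝ) : ℝ := B * Real.log x ^ (-β)

open Real Finset Asymptotics

theorem Real.not_summable_inv_natCast_mul_log :
    ¬ Summable (fun n : ℕ => ((n : ℝ) * log n)⁻¹) := by
  rw [← summable_condensed_iff_of_eventually_nonneg
    (Eventually.of_forall fun n => by positivity)]
  · have hcond : (fun k : ℕ => (2 : ℝ) ^ k * (((2 ^ k : ℕ) : ℝ) * log (2 ^ k : ℕ))⁻¹)
        = fun k : ℕ => (log 2)⁻¹ * (k : ℝ)⁻¹ := by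
      ext k
      push_cast
      rw [Real.log_pow]
      field_simp
    rw [hcond, summable_mul_left_iff (inv_ne_zero (log_pos one_lt_two).ne')]
    exact Real.not_summable_natCast_inv
  · filter_upwards [eventually_ge_atTop 2] with k hk
    have hk : (2 : ℝ) ≤ k := by exact_mod_cast hk
    have hlog : 0 < log k := log_pos (by linarith)
    push_cast
    exact inv_anti₀ (by positivity) (by gcongr <;> linarith)

section ImplicitLogRecursion

variable {γ a : ℝ}

theorem monotoneOn_sub_mul_log (hγ : 0 ≤ γ) :
    MonotoneOn (fun l => l - γ * log l) (Set.Ici γ) := by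
  intro g hg u _ hgu
  simp only [Set.mem_Ici] at hg
  rcases hγ.eq_or_lt with rfl | hγ
  · simpa using hgu
  have hg0 : 0 < g := hγ.trans_le hg
  have hlog : log u - log g ≤ (u - g) / g := by
    rw [← log_div (by linarith) hg0.ne', sub_div, div_self hg0.ne']
    exact log_le_sub_one_of_pos (div_pos (by linarith) hg0)
  have : γ * (log u - log g) ≤ u - g := calc
    γ * (log u - log g) ≤ g * ((u - g) / g) :=
      mul_le_mul hg hlog (by linarith [log_le_log hg0 hgu]) hg0.le
    _ = u - g := by field_simp
  linarith

theorem Real.tendsto_sub_mul_log_atTop :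
    Tendsto (fun l => l - γ * log l) atTop atTop := by
  have h : (fun l => l - γ * log l) ~[atTop] id :=
    IsLittleO.isEquivalent <| (isLittleO_log_id_atTop.const_mul_left (-γ)).congr_left
      fun l => by simp only [Pi.sub_apply, id]; ring
  exact h.symm.tendsto_atTop tendsto_id

/-- Since `l ↦ l - γ log l` increases on `[γ, ∞)`, a barrier `g` only has to violate the
recursion itself for `u` to stay below it. -/
theorem le_of_succ_le_add_mul_log {u g : ℕ → ℝ} (hγ : 0 ≤ γ)
    (hu : ∀ T, u (T + 1) ≤ u T + a + γ * log (u (T + 1)))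
    (h0 : u 0 ≤ g 0) (hg : ∀ T, γ ≤ g (T + 1))
    (hstep : ∀ T, a + γ * log (g (T + 1)) < g (T + 1) - g T) (T : ℕ) : u T ≤ g T := by
  induction T with
  | zero => exact h0
  | succ T ih =>
    by_contra! hlt
    have := monotoneOn_sub_mul_log hγ (hg T) ((hg T).trans hlt.le) hlt.le
    simp only at this
    linarith [hu T, hstep T]

theorem one_le_log_natCast_add_three (T : ℕ) : 1 ≤ log ((T : ℝ) + 3) := by
  rw [le_log_iff_exp_le (by positivity)]
  linarith [exp_one_lt_d9, (Nat.cast_nonneg T : (0 : ℝ) ≤ T)]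

theorem exists_le_mul_mul_log_of_succ_le_add_mul_log {u : ℕ → ℝ} (hγ : 0 ≤ γ)
    (hu : ∀ T, u (T + 1) ≤ u T + a + γ * log (u (T + 1))) :
    ∃ K, ∀ T : ℕ, u T ≤ K * (((T : ℝ) + 3) * log ((T : ℝ) + 3)) := by
  obtain ⟨K, hK_ge, hK⟩ := ((eventually_ge_atTop (max (max (u 0) (2 * γ)) 1)).and
    ((tendsto_sub_mul_log_atTop (γ := γ)).eventually_gt_atTop (a + 2 * γ))).exists
  simp only [max_le_iff] at hK_ge
  obtain ⟨⟨hKu, hKγ⟩, hK1⟩ := hK_ge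
  refine ⟨K, le_of_succ_le_add_mul_log hγ hu ?_ (fun T => ?_) (fun T => ?_)⟩
  · have := one_le_log_natCast_add_three 0
    push_cast at this ⊢
    nlinarith
  · have hl := one_le_log_natCast_add_three (T + 1)
    have hy : (1 : ℝ) ≤ ((T + 1 : ℕ) : ℝ) + 3 := by push_cast; linarith
    nlinarith [mul_le_mul hy hl zero_le_one (by linarith)]
  · -- The barrier gains at least `K log (y + 1)` per step,
    -- while its `γ log` is at most `γ log K + 2γ log (y + 1)`.
    push_cast
    set y : ℝ := (T : ℝ) + 3
    have hy : (T : ℝ) + 1 + 3 = y + 1 := by ring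
    rw [hy]
    have hl := one_le_log_natCast_add_three (T + 1)
    push_cast at hl
    rw [hy] at hl
    have hy0 : 0 < y := by positivity
    have hlog_le : log y ≤ log (y + 1) := log_le_log hy0 (by linarith)
    have hlog_g : log (K * ((y + 1) * log (y + 1))) ≤ log K + 2 * log (y + 1) := by
      rw [log_mul (by positivity) (by positivity), log_mul (by positivity) (by positivity)]
      linarith [log_le_sub_one_of_pos (by positivity : 0 < log (y + 1))]
    have hdiff : K * log (y + 1) ≤ K * ((y + 1) * log (y + 1)) - K * (y * log y) := by
      nlinarith [mul_le_mul_of_nonneg_left hlog_le (by positivity : 0 ≤ K * y)]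
    nlinarith [mul_le_mul_of_nonneg_left hlog_g hγ,
      mul_le_mul_of_nonneg_left hl (by linarith : 0 ≤ K - 2 * γ)]

end ImplicitLogRecursion

theorem inv_max_one_le_rpow_neg {l s : ℝ} (hl : 0 < l) (hs0 : 0 ≤ s) (hs1 : s ≤ 1) :
    (max 1 l)⁻¹ ≤ l ^ (-s) := by
  rcases le_total 1 l with h | h
  · rw [max_eq_right h, ← rpow_neg_one]
    exact rpow_le_rpow_of_exponent_le h (by linarith)
  · rw [max_eq_left h, inv_one, ← rpow_zero l]
    exact rpow_le_rpow_of_exponent_ge hl h (by linarith)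

theorem not_summable_rpow_neg_of_le_mul_mul_log {u : ℕ → ℝ} {K s : ℝ} (hu : ∀ T, 0 < u T)
    (hs0 : 0 ≤ s) (hs1 : s ≤ 1) (hK : ∀ T : ℕ, u T ≤ K * (((T : ℝ) + 3) * log ((T : ℝ) + 3))) :
    ¬ Summable fun T => u T ^ (-s) := by
  intro h
  refine not_summable_inv_natCast_mul_log ((summable_nat_add_iff 3).1 ?_)
  refine (summable_mul_left_iff (by positivity : (max 1 K)⁻¹ ≠ 0)).1 ?_
  refine h.of_nonneg_of_le (fun T => by positivity) fun T => ?_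
  have hy := one_le_log_natCast_add_three T
  push_cast
  have hmax : max 1 (u T) ≤ max 1 K * ((T + 3) * log (T + 3)) := by
    have h1 : 1 ≤ (T + 3 : ℝ) * log (T + 3) := by nlinarith
    refine max_le ?_ ((hK T).trans ?_) <;> nlinarith [le_max_left 1 K, le_max_right 1 K]
  calc (max 1 K)⁻¹ * (((T : ℝ) + 3) * log ((T : ℝ) + 3))⁻¹
      = (max 1 K * ((T + 3) * log (T + 3)))⁻¹ := (mul_inv _ _).symm
    _ ≤ (max 1 (u T))⁻¹ := by gcongr
    _ ≤ u T ^ (-s) := inv_max_one_le_rpow_neg (hu T) hs0 hs1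

theorem Antitone.tendsto_zero_or_exists_pos_le {u : ℕ → ℝ} (hu : Antitone u)
    (hu0 : ∀ T, 0 ≤ u T) : Tendsto u atTop (nhds 0) ∨ ∃ L > 0, ∀ T, L ≤ u T := by
  have hbdd : BddBelow (Set.range u) := ⟨0, by rintro _ ⟨T, rfl⟩; exact hu0 T⟩
  rcases (le_ciInf hu0 : 0 ≤ ⨅ T, u T).eq_or_lt with hL | hL
  · exact .inl (hL ▸ tendsto_atTop_ciInf hu hbdd)
  · exact .inr ⟨_, hL, ciInf_le hbdd⟩

theorem summable_of_le_prod_one_sub {x : ℕ → ℝ} (hx0 : ∀ t, 0 ≤ x t) (hx1 : ∀ t, x t ≤ 1)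
    {L : ℝ} (hL : 0 < L) (h : ∀ T, L ≤ ∏ t ∈ range T, (1 - x t)) : Summable x := by
  refine summable_of_sum_range_le hx0 (c := -log L) fun T => ?_
  have hprod : ∏ t ∈ range T, (1 - x t) ≤ exp (-∑ t ∈ range T, x t) := by
    rw [← sum_neg_distrib, exp_sum]
    exact prod_le_prod (fun t _ => by linarith [hx1 t]) fun t _ => by
      linarith [add_one_le_exp (-x t)]
  have := log_le_log hL ((h T).trans hprod)
  rw [log_exp] at this
  linarith

section Envelope

variable {A B α β x : ℝ}

theorem envEps_pos (hA : 0 < A) (hx : 1 < x) : 0 < envEps A α x :=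
  mul_pos hA (rpow_pos_of_pos (log_pos hx) _)

theorem envDelta_pos (hB : 0 < B) (hx : 1 < x) : 0 < envDelta B β x :=
  mul_pos hB (rpow_pos_of_pos (log_pos hx) _)

theorem log_envEps (hA : 0 < A) (hx : 1 < x) :
    log (envEps A α x) = log A - α * log (log x) := by
  rw [envEps, log_mul hA.ne' (rpow_pos_of_pos (log_pos hx) _).ne', log_rpow (log_pos hx)]
  ring

theorem log_envDelta (hB : 0 < B) (hx : 1 < x) :
    log (envDelta B β x) = log B - β * log (log x) := by
  rw [envDelta, log_mul hB.ne' (rpow_pos_of_pos (log_pos hx) _).ne', log_rpow (log_pos hx)]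
  ring

theorem mul_envEps_mul_sqrt_envDelta (c : ℝ) (hB : 0 ≤ B) (hx : 1 < x) :
    c * envEps A α x * √(envDelta B β x) = c * A * √B * log x ^ (-(α + β / 2)) := by
  have hl := log_pos hx
  rw [envEps, envDelta, sqrt_mul hB, sqrt_eq_rpow (log x ^ _), ← rpow_mul hl.le, neg_add,
    rpow_add hl]
  ring_nf

theorem log_eq_of_eq_div_envEps_envDelta {m m' C D : ℝ} (hA : 0 < A) (hB : 0 < B)
    (hC : 0 < C) (hm : 0 < m) (hm' : 1 < m') (hD : 0 < D)
    (h : m' = m * C / (envEps A α m' ^ 2 * envDelta B β m' ^ 3 * D ^ 2)) :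
    log m' = log m + log C - 2 * log A - 3 * log B + (2 * α + 3 * β) * log (log m')
      - 2 * log D := by
  have hε := envEps_pos (α := α) hA hm'
  have hδ := envDelta_pos (β := β) hB hm'
  conv_lhs => rw [h]
  rw [log_div (by positivity) (by positivity), log_mul hm.ne' hC.ne',
    log_mul (by positivity) (by positivity), log_mul (by positivity) (by positivity),
    log_pow, log_pow, log_pow, log_envEps hA hm', log_envDelta hB hm']
  push_cast
  ring

end Envelope

theorem stmt10_general (A B c C α β : ℝ) (hA : 0 < A) (hB : 0 < B) (hc : 0 < c) (hC : 0 < C)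
    (hα : 0 ≤ α) (hβ : 0 ≤ β) (hαβ : α + β / 2 ≤ 1)
    (n Δ : ℕ → ℝ) (hΔ0 : Δ 0 = 1) (hn1 : ∀ T, 1 < n T)
    (hnrec : ∀ T, n (T + 1) =
      n T * C / ((envEps A α (n (T + 1))) ^ 2 * (envDelta B β (n (T + 1))) ^ 3 * (Δ T) ^ 2))
    (hΔrec : ∀ T, Δ (T + 1) =
      Δ T * (1 - c * envEps A α (n (T + 1)) * Real.sqrt (envDelta B β (n (T + 1)))))
    (hlt : ∀ T, c * envEps A α (n (T + 1)) * Real.sqrt (envDelta B β (n (T + 1))) < 1) :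
    Tendsto Δ atTop (nhds 0) := by
  set κ := c * A * √B
  set x : ℕ → ℝ := fun T => c * envEps A α (n (T + 1)) * √(envDelta B β (n (T + 1)))
  have hx_eq : x = fun T => κ * log (n (T + 1)) ^ (-(α + β / 2)) :=
    funext fun T => mul_envEps_mul_sqrt_envDelta c hB.le (hn1 _)
  have hx_pos (T : ℕ) : 0 < x T :=
    mul_pos (mul_pos hc (envEps_pos hA (hn1 _))) (sqrt_pos.2 (envDelta_pos hB (hn1 _)))
  have hΔ_prod (T : ℕ) : Δ T = ∏ t ∈ range T, (1 - x t) := by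
    induction T with
    | zero => simp [hΔ0]
    | succ T ih => rw [hΔrec, ih, prod_range_succ]
  have hΔ_pos (T : ℕ) : 0 < Δ T := hΔ_prod T ▸ prod_pos fun t _ => sub_pos.2 (hlt t)
  have hΔ_anti : Antitone Δ := antitone_nat_of_succ_le fun T => by
    rw [hΔrec T]
    nlinarith [hx_pos T, hΔ_pos T]
  obtain h | ⟨L, hL, hLΔ⟩ := hΔ_anti.tendsto_zero_or_exists_pos_le fun T => (hΔ_pos T).le
  · exact h
  have hx_summable : Summable x := summable_of_le_prod_one_sub (fun t => (hx_pos t).le)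
    (fun t => (hlt t).le) hL fun T => hΔ_prod T ▸ hLΔ T
  -- With `Δ T ≥ L`, the defining equation of `n (T+1)` becomes a recursion for `log n`.
  have hlog_rec (T : ℕ) : log (n (T + 1)) ≤ log (n T)
      + (log C - 2 * log A - 3 * log B - 2 * log L) + (2 * α + 3 * β) * log (log (n (T + 1))) := by
    linarith [log_eq_of_eq_div_envEps_envDelta hA hB hC (by linarith [hn1 T]) (hn1 _)
      (hΔ_pos T) (hnrec T), log_le_log hL (hLΔ T)]
  obtain ⟨K, hK⟩ := exists_le_mul_mul_log_of_succ_le_add_mul_log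
    (u := fun T => log (n T)) (γ := 2 * α + 3 * β) (by positivity) hlog_rec
  have hsum : Summable fun T => log (n (T + 1)) ^ (-(α + β / 2)) :=
    (summable_mul_left_iff (by positivity : κ ≠ 0)).1 (hx_eq ▸ hx_summable)
  exact (not_summable_rpow_neg_of_le_mul_mul_log (fun T => log_pos (hn1 T)) (by positivity) hαβ
    hK ((summable_nat_add_iff 1).1 hsum)).elim

/-- divergent contraction series, `Δ_T → 0` when `α + β/2 ≤ 1`. -/
theorem stmt10 (A B c C α β k : ℝ) (hA : 0 < A) (hB : 0 < B) (hc : 0 < c) (hC : 0 < C)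
    (hα : 0 ≤ α) (hβ : 0 ≤ β) (hαβ : α + β / 2 ≤ 1)
    (n Δ : ℕ → ℝ) (hn0 : n 0 = k) (hΔ0 : Δ 0 = 1) (hn1 : ∀ T, 1 < n T)
    (hnrec : ∀ T, n (T + 1) =
      n T * C / ((envEps A α (n (T + 1))) ^ 2 * (envDelta B β (n (T + 1))) ^ 3 * (Δ T) ^ 2))
    (hΔrec : ∀ T, Δ (T + 1) =
      Δ T * (1 - c * envEps A α (n (T + 1)) * Real.sqrt (envDelta B β (n (T + 1)))))
    (hlt : ∀ T, c * envEps A α (n (T + 1)) * Real.sqrt (envDelta B β (n (T + 1))) < 1) :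
    Tendsto Δ atTop (nhds 0) :=
  stmt10_general A B c C α β hA hB hc hC hα hβ hαβ n Δ hΔ0 hn1 hnrec hΔrec hlt
end

section
/- Convergent contraction series: Let $\alpha, \beta > 0$ with $\alpha + \beta/2 > 1$, $A,B,C > 0$, and $U_0 > 0$. Define $n_{T+1} = n_T/(2\delta_{n_T}^{1/2})$ and $U_{T+1} = U_T(1 - C\varepsilon_{n_T}\delta_{n_T}^{1/2})$ with $\varepsilon_n = A(\log n)^{-\alpha}$, $\delta_n = B(\log n)^{-\beta}$, and $n_0 = k$. If $k$ is sufficiently large, then $U_T$ decreases to a limit $U_\infty > U_0/2$. -/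
open Filter

open Topology

/-!
Since `log n_{T+1} = log n_T - log 2 - (log B)/2 + (β/2) log log n_T`, once `log k` is large
every step raises `log n_T` by at least one, so `log n_T ≥ N + T`. The contraction
factors `c_T = C ε_{n_T} δ_{n_T}^{1/2} = C A √B (log n_T)^{-(α + β/2)}` are then dominated by the
tail `∑_{m ≥ N} m^{-(α+β/2)}` of a convergent series, which is below `log 2 / 2` for `N` large.
Since `1 - c ≥ exp (-2c)` for `c ≤ 1/2`, every `U_T` stays above `U₀ exp (-2 ∑ c_T) > U₀ / 2`.
-/

lemma exp_neg_two_mul_le_one_sub {x : ℝ} (h0 : 0 ≤ x) (h1 : x ≤ 1 / 2) :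
    Real.exp (-(2 * x)) ≤ 1 - x := by
  have h : Real.exp (2 * x) * Real.exp (-(2 * x)) = 1 := by
    rw [← Real.exp_add, add_neg_cancel, Real.exp_zero]
  nlinarith [Real.add_one_le_exp (2 * x), Real.exp_pos (-(2 * x))]

section Contraction

variable {U c : ℕ → ℝ}

lemma mul_exp_neg_two_mul_sum_le (hU0 : 0 ≤ U 0) (hc0 : ∀ T, 0 ≤ c T)
    (hc1 : ∀ T, c T ≤ 1 / 2) (hrec : ∀ T, U (T + 1) = U T * (1 - c T)) (T : ℕ) :
    U 0 * Real.exp (-(2 * ∑ t ∈ Finset.range T, c t)) ≤ U T := by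
  induction T with
  | zero => simp
  | succ T ih =>
    calc U 0 * Real.exp (-(2 * ∑ t ∈ Finset.range (T + 1), c t))
        = U 0 * Real.exp (-(2 * ∑ t ∈ Finset.range T, c t)) * Real.exp (-(2 * c T)) := by
          rw [Finset.sum_range_succ, mul_assoc, ← Real.exp_add]
          ring_nf
      _ ≤ U T * (1 - c T) :=
          mul_le_mul ih (exp_neg_two_mul_le_one_sub (hc0 T) (hc1 T)) (Real.exp_pos _).le
            ((mul_nonneg hU0 (Real.exp_pos _).le).trans ih)
      _ = U (T + 1) := (hrec T).symm

theorem exists_tendsto_of_mul_one_sub (hU0 : 0 ≤ U 0) (hc0 : ∀ T, 0 ≤ c T)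
    (hc1 : ∀ T, c T ≤ 1 / 2) (hc : Summable c) (hrec : ∀ T, U (T + 1) = U T * (1 - c T)) :
    Antitone U ∧ ∃ L, U 0 * Real.exp (-(2 * ∑' t, c t)) ≤ L ∧ Tendsto U atTop (𝓝 L) := by
  have hlower : ∀ T, U 0 * Real.exp (-(2 * ∑' t, c t)) ≤ U T := fun T =>
    calc U 0 * Real.exp (-(2 * ∑' t, c t))
        ≤ U 0 * Real.exp (-(2 * ∑ t ∈ Finset.range T, c t)) := by
          gcongr
          exact hc.sum_le_tsum _ (fun t _ => hc0 t)
      _ ≤ U T := mul_exp_neg_two_mul_sum_le hU0 hc0 hc1 hrec T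
  have hanti : Antitone U := antitone_nat_of_succ_le fun T => by
    have hUT : 0 ≤ U T := (mul_nonneg hU0 (Real.exp_pos _).le).trans (hlower T)
    rw [hrec T]
    nlinarith [hc0 T]
  refine ⟨hanti, ⨅ T, U T, le_ciInf hlower, tendsto_atTop_ciInf hanti ?_⟩
  exact ⟨_, Set.forall_mem_range.2 hlower⟩

end Contraction

section Envelope

variable {A B α β x : ℝ}

lemma log_div_two_sqrt_envDelta (hB : 0 < B) (hx : 0 < Real.log x) :
    Real.log (x / (2 * Real.sqrt (envDelta B β x)))
      = Real.log x - Real.log 2 - Real.log B / 2 + β / 2 * Real.log (Real.log x) := by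
  have hδ : 0 < envDelta B β x := mul_pos hB (Real.rpow_pos_of_pos hx _)
  have hx0 : x ≠ 0 := by rintro rfl; simp at hx
  rw [Real.log_div hx0 (by positivity), Real.log_mul two_ne_zero (by positivity),
    Real.log_sqrt hδ.le, envDelta, Real.log_mul hB.ne' (Real.rpow_pos_of_pos hx _).ne',
    Real.log_rpow hx]
  ring

lemma envEps_mul_sqrt_envDelta (hB : 0 ≤ B) (hx : 0 < Real.log x) :
    envEps A α x * Real.sqrt (envDelta B β x)
      = A * Real.sqrt B * Real.log x ^ (-(α + β / 2)) := by
  rw [envEps, envDelta, Real.sqrt_mul hB, Real.sqrt_eq_rpow (_ ^ _), ← Real.rpow_mul hx.le,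
    neg_add, Real.rpow_add hx]
  ring_nf

lemma add_le_log_of_iterate {n : ℕ → ℝ} {a : ℝ} (hB : 0 < B) (ha : 0 < a)
    (hgrowth : ∀ y, a ≤ y → 1 + Real.log 2 + Real.log B / 2 ≤ β / 2 * Real.log y)
    (h0 : a ≤ Real.log (n 0))
    (hrec : ∀ T, n (T + 1) = n T / (2 * Real.sqrt (envDelta B β (n T)))) (T : ℕ) :
    a + T ≤ Real.log (n T) := by
  induction T with
  | zero => simpa using h0
  | succ T ih =>
    have haT : a ≤ Real.log (n T) := le_trans (by simp) ih
    rw [hrec T, log_div_two_sqrt_envDelta hB (ha.trans_le haT)]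
    push_cast
    linarith [hgrowth _ haT]

end Envelope

lemma eventually_le_mul_log {β : ℝ} (hβ : 0 < β) (K : ℝ) :
    ∀ᶠ N : ℕ in atTop, ∀ y : ℝ, N ≤ y → K ≤ β / 2 * Real.log y := by
  obtain ⟨a, ha⟩ := eventually_atTop.1
    ((Real.tendsto_log_atTop.const_mul_atTop (half_pos hβ)).eventually_ge_atTop K)
  filter_upwards [tendsto_natCast_atTop_atTop.eventually_ge_atTop a] with N hN y hy
    using ha y (hN.trans hy)

/-- The factor `c_x = C ε_x δ_x^{1/2}` in `U_{T+1} = U_T (1 - c_{n_T})`. -/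
noncomputable def contractionCoeff (A B C α β x : ℝ) : ℝ :=
  C * envEps A α x * Real.sqrt (envDelta B β x)

section ContractionCoeff

variable {A B C α β : ℝ}

lemma contractionCoeff_eq {x : ℝ} (hB : 0 ≤ B) (hx : 0 < Real.log x) :
    contractionCoeff A B C α β x = C * A * Real.sqrt B * Real.log x ^ (-(α + β / 2)) := by
  rw [contractionCoeff, mul_assoc, envEps_mul_sqrt_envDelta hB hx]
  ring

lemma summable_contractionCoeff_of_add_le_log (hA : 0 ≤ A) (hB : 0 ≤ B) (hC : 0 ≤ C)
    (hαβ : 1 < α + β / 2) {n : ℕ → ℝ} {N : ℕ} (hN : 1 ≤ N)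
    (hlog : ∀ T, N + T ≤ Real.log (n T)) :
    (∀ T, 0 ≤ contractionCoeff A B C α β (n T)) ∧
    Summable (fun T => contractionCoeff A B C α β (n T)) ∧
    ∑' T, contractionCoeff A B C α β (n T)
      ≤ C * A * Real.sqrt B * ∑' m, ((m + N : ℕ) : ℝ) ^ (-(α + β / 2)) := by
  have hN' : (1 : ℝ) ≤ N := by exact_mod_cast hN
  have hpos : ∀ T, 0 < Real.log (n T) := fun T => by linarith [hlog T]
  have hc0 : ∀ T, 0 ≤ contractionCoeff A B C α β (n T) := fun T => by
    rw [contractionCoeff_eq hB (hpos T)]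
    exact mul_nonneg (by positivity) (Real.rpow_nonneg (hpos T).le _)
  have hc_le : ∀ T, contractionCoeff A B C α β (n T)
      ≤ C * A * Real.sqrt B * ((T + N : ℕ) : ℝ) ^ (-(α + β / 2)) := fun T => by
    rw [contractionCoeff_eq hB (hpos T)]
    exact mul_le_mul_of_nonneg_left (Real.rpow_le_rpow_of_nonpos (by positivity)
      (by push_cast; linarith [hlog T]) (by linarith)) (by positivity)
  have hmajorant : Summable fun T : ℕ => C * A * Real.sqrt B * ((T + N : ℕ) : ℝ) ^ (-(α + β / 2)) :=
    ((summable_nat_add_iff N).2 (Real.summable_nat_rpow.2 (by linarith))).mul_left _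
  have hc : Summable fun T => contractionCoeff A B C α β (n T) :=
    .of_nonneg_of_le hc0 hc_le hmajorant
  exact ⟨hc0, hc, (hc.tsum_le_tsum hc_le hmajorant).trans_eq tsum_mul_left⟩

end ContractionCoeff

lemma half_lt_mul_exp_neg_two_mul {u x : ℝ} (hu : 0 < u) (hx : x < Real.log 2 / 2) :
    u / 2 < u * Real.exp (-(2 * x)) :=
  calc u / 2 = u * Real.exp (-Real.log 2) := by
        rw [Real.exp_neg, Real.exp_log two_pos]; ring
    _ < u * Real.exp (-(2 * x)) := by gcongr; linarith

theorem stmt11_general (A B C α β U₀ : ℝ) (hA : 0 < A) (hB : 0 < B) (hC : 0 < C)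
    (hβ : 0 < β) (hαβ : 1 < α + β / 2) (hU : 0 < U₀) :
    ∃ k₀ : ℝ, ∀ k : ℝ, k₀ ≤ k → ∀ n U : ℕ → ℝ,
      n 0 = k → U 0 = U₀ →
      (∀ T, n (T + 1) = n T / (2 * Real.sqrt (envDelta B β (n T)))) →
      (∀ T, U (T + 1) = U T * (1 - C * envEps A α (n T) * Real.sqrt (envDelta B β (n T)))) →
      (∀ T₁ T₂, T₁ ≤ T₂ → U T₂ ≤ U T₁) ∧
      ∃ L : ℝ, U₀ / 2 < L ∧ Tendsto U atTop (nhds L) := by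
  have hlog2 : C * A * Real.sqrt B * 0 < Real.log 2 / 2 := by simpa using Real.log_pos one_lt_two
  obtain ⟨N, hN, hgrowth, htail⟩ := ((eventually_ge_atTop 1).and
    ((eventually_le_mul_log hβ (1 + Real.log 2 + Real.log B / 2)).and
    (((tendsto_sum_nat_add fun m : ℕ => (m : ℝ) ^ (-(α + β / 2))).const_mul
      (C * A * Real.sqrt B)).eventually_lt_const hlog2))).exists
  refine ⟨Real.exp N, fun k hk n U hn0 hU0 hnrec hUrec => ?_⟩
  have hlog : ∀ T, N + T ≤ Real.log (n T) :=
    add_le_log_of_iterate hB (by exact_mod_cast hN) hgrowth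
      (by rw [hn0, ← Real.log_exp N]; exact Real.log_le_log (Real.exp_pos _) hk) hnrec
  obtain ⟨hc0, hc, hsum⟩ :=
    summable_contractionCoeff_of_add_le_log hA.le hB.le hC.le hαβ hN hlog
  replace hsum := hsum.trans_lt (by exact_mod_cast htail)
  have hc_half : ∀ T, contractionCoeff A B C α β (n T) ≤ 1 / 2 := fun T => by
    linarith [hc.le_tsum T (fun t _ => hc0 t), Real.log_two_lt_d9]
  obtain ⟨hanti, L, hL, hUL⟩ := exists_tendsto_of_mul_one_sub (hU0 ▸ hU.le) hc0 hc_half hc hUrec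
  exact ⟨fun _ _ h => hanti h, L,
    (half_lt_mul_exp_neg_two_mul hU hsum).trans_le (hU0 ▸ hL), hUL⟩

/-- convergent contraction series, `U_T` decreases to a limit `> U₀ / 2`
when `α + β/2 > 1` and `k` is sufficiently large. -/
theorem stmt11 (A B C α β U₀ : ℝ) (hA : 0 < A) (hB : 0 < B) (hC : 0 < C)
    (hα : 0 < α) (hβ : 0 < β) (hαβ : 1 < α + β / 2) (hU : 0 < U₀) :
    ∃ k₀ : ℝ, ∀ k : ℝ, k₀ ≤ k → ∀ n U : ℕ → ℝ,
      n 0 = k → U 0 = U₀ →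
      (∀ T, n (T + 1) = n T / (2 * Real.sqrt (envDelta B β (n T)))) →
      (∀ T, U (T + 1) = U T * (1 - C * envEps A α (n T) * Real.sqrt (envDelta B β (n T)))) →
      (∀ T₁ T₂, T₁ ≤ T₂ → U T₂ ≤ U T₁) ∧
      ∃ L : ℝ, U₀ / 2 < L ∧ Tendsto U atTop (nhds L) :=
  stmt11_general A B C α β U₀ hA hB hC hβ hαβ hU
end
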